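/- For every u, v ∈ ℝⁿ one has h(u∘v) + (μ/2)(‖u‖² + ‖v‖²) ≥ h(u∘v) + μ‖u∘v‖₁, where u∘v denotes the entrywise product; consequently, the infimum over (u,v) ∈ ℝⁿ×ℝⁿ of G(u,v) := h(u∘v) + (μ/2)(‖u‖² + ‖v‖²) equals the infimum over x ∈ ℝⁿ of f(x) := h(x) + μ‖x‖₁. -/

import Mathlib

/-!
Termwise AM-GM, `|u i * v i| ≤ (u i ^ 2 + v i ^ 2) / 2`, gives `G(u, v) ≥ f(u∘v)`. Conversely every
`x` factors as `x = u∘v` with `u i ^ 2 = v i ^ 2 = |x i|`, where AM-GM is an equality, so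
`G(u, v) = f(x)`. Hence the two ranges dominate each other from below and have the same infimum.
-/

open Set

lemma Real.exists_mul_eq_sq_eq_abs (a : ℝ) : ∃ b c : ℝ, b * c = a ∧ b ^ 2 = |a| ∧ c ^ 2 = |a| := by
  rcases le_or_gt 0 a with ha | ha
  · refine ⟨√a, √a, Real.mul_self_sqrt ha, ?_, ?_⟩ <;> rw [Real.sq_sqrt ha, abs_of_nonneg ha]
  · have ha' : 0 ≤ -a := by linarith
    refine ⟨-√(-a), √(-a), ?_, ?_, ?_⟩
    · rw [neg_mul, Real.mul_self_sqrt ha', neg_neg]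
    · rw [neg_sq, Real.sq_sqrt ha', abs_of_neg ha]
    · rw [Real.sq_sqrt ha', abs_of_neg ha]

namespace EuclideanSpace

variable {ι : Type*} [Fintype ι]

lemma sum_abs_mul_le (u v : EuclideanSpace ℝ ι) :
    ∑ i, |u i * v i| ≤ (‖u‖ ^ 2 + ‖v‖ ^ 2) / 2 := by
  rw [real_norm_sq_eq, real_norm_sq_eq, ← Finset.sum_add_distrib, Finset.sum_div]
  refine Finset.sum_le_sum fun i _ => ?_
  have := two_mul_le_add_sq |u i| |v i|
  rw [sq_abs, sq_abs] at this
  rw [abs_mul]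
  linarith

lemma exists_mul_eq_norm_sq_eq (x : EuclideanSpace ℝ ι) :
    ∃ u v : EuclideanSpace ℝ ι,
      (∀ i, u i * v i = x i) ∧ ‖u‖ ^ 2 = ∑ i, |x i| ∧ ‖v‖ ^ 2 = ∑ i, |x i| := by
  choose b c hbc hb hc using fun i => Real.exists_mul_eq_sq_eq_abs (x i)
  refine ⟨WithLp.toLp 2 b, WithLp.toLp 2 c, hbc, ?_, ?_⟩ <;>
    simp only [real_norm_sq_eq, hb, hc]

end EuclideanSpace

theorem stmt0 (n : ℕ)
    (h : EuclideanSpace ℝ (Fin n) → ℝ)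
    (μ : ℝ) (hμ : 0 < μ)
    (G : EuclideanSpace ℝ (Fin n) × EuclideanSpace ℝ (Fin n) → ℝ)
    (hG : G = fun p => h (WithLp.toLp 2 (fun i => p.1 i * p.2 i)) + μ / 2 * (‖p.1‖ ^ 2 + ‖p.2‖ ^ 2))
    (f : EuclideanSpace ℝ (Fin n) → ℝ)
    (hf : f = fun x => h x + μ * ∑ i, |x i|) :
    (∀ u v : EuclideanSpace ℝ (Fin n),
        G (u, v) ≥ h (WithLp.toLp 2 (fun i => u i * v i)) + μ * ∑ i, |u i * v i|) ∧
    (⨅ p : EuclideanSpace ℝ (Fin n) × EuclideanSpace ℝ (Fin n), G p) =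
      (⨅ x : EuclideanSpace ℝ (Fin n), f x) := by
  subst hG hf
  have G_ge : ∀ u v : EuclideanSpace ℝ (Fin n),
      h (WithLp.toLp 2 (fun i => u i * v i)) + μ / 2 * (‖u‖ ^ 2 + ‖v‖ ^ 2) ≥
        h (WithLp.toLp 2 (fun i => u i * v i)) + μ * ∑ i, |u i * v i| := fun u v => by
    have := mul_le_mul_of_nonneg_left (EuclideanSpace.sum_abs_mul_le u v) hμ.le
    linarith
  refine ⟨G_ge, csInf_eq_csInf_of_forall_exists_le ?_ ?_⟩
  · rintro _ ⟨⟨u, v⟩, rfl⟩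
    exact ⟨_, mem_range_self (WithLp.toLp 2 fun i => u i * v i), by simpa using G_ge u v⟩
  · rintro _ ⟨x, rfl⟩
    obtain ⟨u, v, huv, hu, hv⟩ := EuclideanSpace.exists_mul_eq_norm_sq_eq x
    have hx : WithLp.toLp 2 (fun i => u i * v i) = x := by ext i; exact huv i
    refine ⟨_, mem_range_self (u, v), le_of_eq ?_⟩
    simp only [hx, hu, hv]
    ring
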